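/- arXiv:1906.09599 — 3 statements merged into one kernel-verified Lean document; each statement's English description precedes it below -/
import Mathlib

section
/- Let $n \ge 1$, $p \ge 1$, $\lambda > 1$. For every nonnegative compactly supported measurable function $g$ on $\mathbb{R}^n$ with $\|g\|_1 > 0$ and $\|g\|_\lambda < \infty$, and with $l(t) = \mathrm{vol}(\{g \ge t\})$, there exists a constant $A_{n,p,\lambda} > 0$ depending only on $n,p,\lambda$ such that $\|g\|_1 \le A_{n,p,\lambda}\, \|g\|_\lambda^{\frac{\lambda p}{(n+p)(\lambda-1)+p}} \left(\int_0^\infty l(t)^{\frac{n+p}{n}} dt\right)^{\frac{(\lambda-1)n}{(n+p)(\lambda-1)+p}}$. Equivalently, $\int_0^\infty l(t)^{\frac{n+p}{n}} dt \ge a_{n,p,\lambda}\, \|g\|_1^{\frac{(n+p)(\lambda-1)+p}{(\lambda-1)n}} \|g\|_\lambda^{-\frac{\lambda p}{(\lambda-1)n}}$ with $a_{n,p,\lambda} = A_{n,p,\lambda}^{-\frac{(n+p)(\lambda-1)+p}{(\lambda-1)n}}$. -/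
/-!
Let `l t = μ {x | t ≤ g x}`, so that `∫ g = ∫₀^∞ l` (layer cake), and split this integral at
some `s > 0`. On `(0, s]`, Hölder's inequality with exponents `(n + p)/n` and `(n + p)/p` bounds it
by `J ^ (n/(n+p)) s ^ (p/(n+p))` with `J = ∫₀^∞ l ^ ((n+p)/n)`; on `(s, ∞)`, Chebyshev's bound
`l t ≤ t ^ (-λ) ‖g‖_λ ^ λ` bounds it by `s ^ (1-λ) ‖g‖_λ ^ λ / (λ - 1)`. Minimising
`a s ^ γ + b s ^ (-μ)` over `s` gives `2 a ^ (μ/(γ+μ)) b ^ (γ/(γ+μ))`, which is the first inequality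
with `A = 2 (λ - 1) ^ (-p/((n+p)(λ-1)+p))`. The second inequality is the first one solved for `J`.
-/

open MeasureTheory Real Set
open scoped ENNReal

lemma lintegral_Ioi_ofReal_rpow_neg {r s : ℝ} (hr : 1 < r) (hs : 0 < s) :
    ∫⁻ t in Ioi s, ENNReal.ofReal (t ^ (-r)) = ENNReal.ofReal (s ^ (1 - r) / (r - 1)) := by
  rw [← ofReal_integral_eq_lintegral_ofReal (integrableOn_Ioi_rpow_of_lt (by linarith) hs)
      ((ae_restrict_iff' measurableSet_Ioi).2 (ae_of_all _ fun t ht ↦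
        rpow_nonneg (hs.trans ht).le _)),
    integral_Ioi_rpow_of_lt (by linarith) hs, neg_add_eq_sub, neg_div, ← div_neg, neg_sub]

lemma setLIntegral_Ioc_le_lintegral_Ioi_rpow_mul {f : ℝ → ℝ≥0∞} (hf : Measurable f) {q : ℝ}
    (hq : 1 ≤ q) {s : ℝ} (hs : 0 ≤ s) :
    ∫⁻ t in Ioc 0 s, f t ≤
      (∫⁻ t in Ioi 0, f t ^ q) ^ (1 / q) * ENNReal.ofReal (s ^ (1 - 1 / q)) := by
  have h := eLpNorm'_le_eLpNorm'_mul_rpow_measure_univ one_pos hq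
    (f := f) (μ := volume.restrict (Ioc 0 s)) hf.aestronglyMeasurable
  simp only [eLpNorm'_eq_lintegral_enorm, enorm_eq_self, ENNReal.rpow_one, div_one,
    Measure.restrict_apply_univ, volume_Ioc, sub_zero] at h
  have hq' : 0 ≤ 1 - 1 / q := sub_nonneg.2 ((div_le_one₀ (by linarith)).2 hq)
  rw [← ENNReal.ofReal_rpow_of_nonneg hs hq']
  refine h.trans ?_
  gcongr
  exact Ioc_subset_Ioi_self

lemma exists_mul_rpow_add_mul_rpow_neg_eq {a b γ μ : ℝ} (ha : 0 < a) (hb : 0 < b) (hγ : 0 < γ)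
    (hμ : 0 < μ) :
    ∃ s > 0, a * s ^ γ + b * s ^ (-μ) = 2 * a ^ (μ / (γ + μ)) * b ^ (γ / (γ + μ)) := by
  have hc : 0 < γ + μ := by linarith
  refine ⟨(b / a) ^ (γ + μ)⁻¹, by positivity, ?_⟩
  set s := (b / a) ^ (γ + μ)⁻¹ with hs_def
  have hs : 0 < s := by positivity
  have hbalance : b * s ^ (-μ) = a * s ^ γ := by
    have hsc : s ^ (γ + μ) = b / a := rpow_inv_rpow (div_pos hb ha).le hc.ne'
    calc b * s ^ (-μ) = a * (s ^ (γ + μ) * s ^ (-μ)) := by rw [hsc]; field_simp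
      _ = a * s ^ γ := by rw [← rpow_add hs]; ring_nf
  have hvalue : a * s ^ γ = a ^ (μ / (γ + μ)) * b ^ (γ / (γ + μ)) := by
    rw [hs_def, ← rpow_mul (div_pos hb ha).le, div_rpow hb.le ha.le,
      show μ / (γ + μ) = 1 - (γ + μ)⁻¹ * γ by field_simp; ring, rpow_sub ha, rpow_one,
      show γ / (γ + μ) = (γ + μ)⁻¹ * γ by ring]
    ring
  rw [hbalance, hvalue]
  ring

lemma ENNReal.le_two_mul_rpow_mul_rpow_of_forall_le {I a b : ℝ≥0∞} {γ μ : ℝ} (ha₀ : a ≠ 0)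
    (ha : a ≠ ⊤) (hb₀ : b ≠ 0) (hb : b ≠ ⊤) (hγ : 0 < γ) (hμ : 0 < μ)
    (h : ∀ s : ℝ, 0 < s → I ≤ a * ENNReal.ofReal (s ^ γ) + b * ENNReal.ofReal (s ^ (-μ))) :
    I ≤ 2 * a ^ (μ / (γ + μ)) * b ^ (γ / (γ + μ)) := by
  have ha' := ENNReal.toReal_pos ha₀ ha
  have hb' := ENNReal.toReal_pos hb₀ hb
  obtain ⟨s, hs, heq⟩ := exists_mul_rpow_add_mul_rpow_neg_eq ha' hb' hγ hμ
  convert h s hs using 1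
  rw [← ENNReal.ofReal_toReal ha, ← ENNReal.ofReal_toReal hb, ← ENNReal.ofReal_mul ha'.le,
    ← ENNReal.ofReal_mul hb'.le, ← ENNReal.ofReal_add (by positivity) (by positivity), heq,
    ENNReal.ofReal_mul (by positivity), ENNReal.ofReal_mul (by norm_num),
    ENNReal.ofReal_rpow_of_pos ha', ENNReal.ofReal_rpow_of_pos hb', ENNReal.ofReal_ofNat]

lemma ENNReal.ofReal_rpow_neg_mul_rpow_mul_rpow_le {A : ℝ} {I x J : ℝ≥0∞} {α β c e : ℝ}
    (hA : 0 < A) (hx₀ : x ≠ 0) (hx : x ≠ ⊤) (hc : 0 ≤ c) (hβc : β * c = 1) (hαc : α * c + e = 0)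
    (h : I ≤ ENNReal.ofReal A * x ^ α * J ^ β) :
    ENNReal.ofReal (A ^ (-c)) * I ^ c * x ^ e ≤ J := by
  have hA' : ENNReal.ofReal (A ^ (-c)) * ENNReal.ofReal A ^ c = 1 := by
    rw [ENNReal.ofReal_rpow_of_pos hA, ← ENNReal.ofReal_mul (by positivity), ← Real.rpow_add hA,
      neg_add_cancel, Real.rpow_zero, ENNReal.ofReal_one]
  have hx' : x ^ (α * c) * x ^ e = 1 := by
    rw [← ENNReal.rpow_add _ _ hx₀ hx, hαc, ENNReal.rpow_zero]
  calc ENNReal.ofReal (A ^ (-c)) * I ^ c * x ^ e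
      ≤ ENNReal.ofReal (A ^ (-c)) * (ENNReal.ofReal A * x ^ α * J ^ β) ^ c * x ^ e := by gcongr
    _ = (ENNReal.ofReal (A ^ (-c)) * ENNReal.ofReal A ^ c) * (x ^ (α * c) * x ^ e) * J := by
        rw [ENNReal.mul_rpow_of_nonneg _ _ hc, ENNReal.mul_rpow_of_nonneg _ _ hc,
          ← ENNReal.rpow_mul, ← ENNReal.rpow_mul, hβc, ENNReal.rpow_one]
        ring
    _ = J := by rw [hA', hx', one_mul, one_mul]

section LayerCake

variable {α : Type*} [MeasurableSpace α] {μ : Measure α} {g : α → ℝ} {r : ℝ}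

lemma antitone_measure_setOf_le : Antitone fun t ↦ μ {x | t ≤ g x} :=
  fun _ _ h ↦ measure_mono fun _ hx ↦ h.trans hx

lemma measure_setOf_le_le_ofReal_rpow_neg_mul (hg : AEMeasurable g μ) (hr : 0 ≤ r) {t : ℝ}
    (ht : 0 < t) :
    μ {x | t ≤ g x} ≤ ENNReal.ofReal (t ^ (-r)) * ∫⁻ x, ENNReal.ofReal (g x ^ r) ∂μ := by
  have htr : 0 < t ^ r := rpow_pos_of_pos ht r
  calc μ {x | t ≤ g x}
      ≤ μ {x | ENNReal.ofReal (t ^ r) ≤ ENNReal.ofReal (g x ^ r)} :=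
        measure_mono fun x hx ↦ ENNReal.ofReal_le_ofReal (rpow_le_rpow ht.le hx hr)
    _ ≤ (∫⁻ x, ENNReal.ofReal (g x ^ r) ∂μ) / ENNReal.ofReal (t ^ r) :=
        meas_ge_le_lintegral_div (by fun_prop) (by simpa using htr) ENNReal.ofReal_ne_top
    _ = ENNReal.ofReal (t ^ (-r)) * ∫⁻ x, ENNReal.ofReal (g x ^ r) ∂μ := by
        rw [ENNReal.div_eq_inv_mul, ← ENNReal.ofReal_inv_of_pos htr, rpow_neg ht.le]

lemma setLIntegral_Ioi_measure_setOf_le_le (hg : AEMeasurable g μ) (hr : 1 < r) {s : ℝ}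
    (hs : 0 < s) :
    ∫⁻ t in Ioi s, μ {x | t ≤ g x} ≤
      ENNReal.ofReal ((r - 1)⁻¹) * (∫⁻ x, ENNReal.ofReal (g x ^ r) ∂μ) *
        ENNReal.ofReal (s ^ (-(r - 1))) :=
  calc ∫⁻ t in Ioi s, μ {x | t ≤ g x}
      ≤ ∫⁻ t in Ioi s, ENNReal.ofReal (t ^ (-r)) * ∫⁻ x, ENNReal.ofReal (g x ^ r) ∂μ :=
        setLIntegral_mono' measurableSet_Ioi fun t ht ↦
          measure_setOf_le_le_ofReal_rpow_neg_mul hg (by linarith) (hs.trans ht)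
    _ = ENNReal.ofReal ((r - 1)⁻¹) * (∫⁻ x, ENNReal.ofReal (g x ^ r) ∂μ) *
          ENNReal.ofReal (s ^ (-(r - 1))) := by
        rw [lintegral_mul_const _ (by fun_prop), lintegral_Ioi_ofReal_rpow_neg hr hs,
          div_eq_inv_mul, ENNReal.ofReal_mul (by positivity), neg_sub]
        ring

lemma lintegral_ofReal_rpow_ne_zero (hg : AEMeasurable g μ)
    (hI : ∫⁻ x, ENNReal.ofReal (g x) ∂μ ≠ 0) : ∫⁻ x, ENNReal.ofReal (g x ^ r) ∂μ ≠ 0 := by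
  contrapose! hI
  rw [lintegral_eq_zero_iff' (by fun_prop)] at hI
  refine lintegral_eq_zero_of_ae_eq_zero (hI.mono fun x hx ↦ ?_)
  simp only [Pi.zero_apply, ENNReal.ofReal_eq_zero] at hx ⊢
  by_contra! hgx
  exact (rpow_pos_of_pos hgx r).not_ge hx

lemma setLIntegral_Ioi_measure_setOf_le_rpow_ne_zero (hg₀ : 0 ≤ᵐ[μ] g) (hg : AEMeasurable g μ)
    {q : ℝ} (hq : 0 < q) (hI : ∫⁻ x, ENNReal.ofReal (g x) ∂μ ≠ 0) :
    ∫⁻ t in Ioi 0, μ {x | t ≤ g x} ^ q ≠ 0 := by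
  rw [lintegral_eq_lintegral_meas_le μ hg₀ hg] at hI
  contrapose! hI
  rw [lintegral_eq_zero_iff (antitone_measure_setOf_le.measurable.pow_const _)] at hI
  exact lintegral_eq_zero_of_ae_eq_zero
    (hI.mono fun t ht ↦ (ENNReal.rpow_eq_zero_iff_of_pos hq).1 ht)

lemma lintegral_ofReal_le_rpow_mul_add_mul (hg₀ : 0 ≤ᵐ[μ] g) (hg : AEMeasurable g μ) {q : ℝ}
    (hq : 1 ≤ q) (hr : 1 < r) {s : ℝ} (hs : 0 < s) :
    ∫⁻ x, ENNReal.ofReal (g x) ∂μ ≤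
      (∫⁻ t in Ioi 0, μ {x | t ≤ g x} ^ q) ^ (1 / q) * ENNReal.ofReal (s ^ (1 - 1 / q)) +
        ENNReal.ofReal ((r - 1)⁻¹) * (∫⁻ x, ENNReal.ofReal (g x ^ r) ∂μ) *
          ENNReal.ofReal (s ^ (-(r - 1))) :=
  calc ∫⁻ x, ENNReal.ofReal (g x) ∂μ
      = ∫⁻ t in Ioi 0, μ {x | t ≤ g x} := lintegral_eq_lintegral_meas_le μ hg₀ hg
    _ = (∫⁻ t in Ioc 0 s, μ {x | t ≤ g x}) + ∫⁻ t in Ioi s, μ {x | t ≤ g x} := by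
        rw [← lintegral_union measurableSet_Ioi (Ioc_disjoint_Ioi le_rfl),
          Ioc_union_Ioi_eq_Ioi hs.le]
    _ ≤ _ := add_le_add
        (setLIntegral_Ioc_le_lintegral_Ioi_rpow_mul antitone_measure_setOf_le.measurable hq hs.le)
        (setLIntegral_Ioi_measure_setOf_le_le hg hr hs)

theorem lintegral_ofReal_le_mul_rpow_mul_rpow {n p : ℝ} (hn : 0 < n) (hp : 0 < p) (hr : 1 < r)
    (hg₀ : 0 ≤ᵐ[μ] g) (hg : AEMeasurable g μ) (hK : ∫⁻ x, ENNReal.ofReal (g x ^ r) ∂μ ≠ ⊤) :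
    ∫⁻ x, ENNReal.ofReal (g x) ∂μ ≤
      ENNReal.ofReal (2 * (r - 1) ^ (-(p / ((n + p) * (r - 1) + p)))) *
        ((∫⁻ x, ENNReal.ofReal (g x ^ r) ∂μ) ^ (1 / r)) ^ (r * p / ((n + p) * (r - 1) + p)) *
        (∫⁻ t in Ioi 0, μ {x | t ≤ g x} ^ ((n + p) / n)) ^
          ((r - 1) * n / ((n + p) * (r - 1) + p)) := by
  set I := ∫⁻ x, ENNReal.ofReal (g x) ∂μ
  set K := ∫⁻ x, ENNReal.ofReal (g x ^ r) ∂μ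
  set J := ∫⁻ t in Ioi 0, μ {x | t ≤ g x} ^ ((n + p) / n)
  set D := (n + p) * (r - 1) + p with hD_def
  have hr₁ : 0 < r - 1 := sub_pos.2 hr
  have hD : 0 < D := by positivity
  have hq : 1 ≤ (n + p) / n := by rw [le_div_iff₀ hn]; linarith
  have hγ : 0 < 1 - 1 / ((n + p) / n) := by
    rw [one_div_div, sub_pos, div_lt_one] <;> linarith
  rcases eq_or_ne I 0 with hI | hI
  · rw [hI]; exact zero_le
  have hK₀ : K ≠ 0 := lintegral_ofReal_rpow_ne_zero hg hI
  have hJ₀ : J ≠ 0 := setLIntegral_Ioi_measure_setOf_le_rpow_ne_zero hg₀ hg (by positivity) hI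
  have hKr₀ : K ^ (1 / r) ≠ 0 := (ENNReal.rpow_pos (pos_iff_ne_zero.2 hK₀) hK).ne'
  by_cases hJ : J = ⊤
  · rw [hJ, ENNReal.top_rpow_of_pos (by positivity), ENNReal.mul_top]
    · exact le_top
    · exact mul_ne_zero (ENNReal.ofReal_pos.2 (by positivity)).ne'
        (ENNReal.rpow_pos (pos_iff_ne_zero.2 hKr₀)
          (ENNReal.rpow_ne_top_of_nonneg (by positivity) hK)).ne'
  have key := ENNReal.le_two_mul_rpow_mul_rpow_of_forall_le (I := I)
    (a := J ^ (1 / ((n + p) / n)))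
    (b := ENNReal.ofReal ((r - 1)⁻¹) * K) (ENNReal.rpow_pos (pos_iff_ne_zero.2 hJ₀) hJ).ne'
    (ENNReal.rpow_ne_top_of_nonneg (by positivity) hJ)
    (mul_ne_zero (ENNReal.ofReal_pos.2 (by positivity)).ne' hK₀)
    (ENNReal.mul_ne_top ENNReal.ofReal_ne_top hK) hγ hr₁
    (fun s hs ↦ lintegral_ofReal_le_rpow_mul_add_mul hg₀ hg hq hr hs)
  refine key.trans_eq ?_
  have hγμ : 1 - 1 / ((n + p) / n) + (r - 1) = D / (n + p) := by
    rw [hD_def]; field_simp; ring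
  have e₁ : 1 / ((n + p) / n) * ((r - 1) / (1 - 1 / ((n + p) / n) + (r - 1))) =
      (r - 1) * n / D := by
    rw [hγμ]; field_simp
  have e₂ : (1 - 1 / ((n + p) / n)) / (1 - 1 / ((n + p) / n) + (r - 1)) = p / D := by
    rw [hγμ]; field_simp; ring
  have e₃ : 1 / r * (r * p / D) = p / D := by field_simp
  rw [← ENNReal.rpow_mul, e₁, e₂, ENNReal.mul_rpow_of_nonneg _ _ (by positivity),
    ← ENNReal.rpow_mul, e₃, ENNReal.ofReal_mul (by norm_num),
    ENNReal.ofReal_rpow_of_pos (by positivity), inv_rpow hr₁.le, ← rpow_neg hr₁.le,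
    ENNReal.ofReal_ofNat]
  ring

end LayerCake

theorem stmt3 (n : ℕ) (hn : 1 ≤ n) (p lam : ℝ) (hp : 1 ≤ p) (hlam : 1 < lam) :
    ∃ A : ℝ, 0 < A ∧
      ∀ g : EuclideanSpace ℝ (Fin n) → ℝ, Measurable g → (∀ x, 0 ≤ g x) →
        HasCompactSupport g →
        0 < (∫⁻ x, ENNReal.ofReal (g x)) →
        (∫⁻ x, ENNReal.ofReal (g x ^ lam)) ^ ((1 : ℝ) / lam) < ∞ →
        ((∫⁻ x, ENNReal.ofReal (g x)) ≤
            ENNReal.ofReal A *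
              ((∫⁻ x, ENNReal.ofReal (g x ^ lam)) ^ ((1 : ℝ) / lam)) ^
                (lam * p / (((n : ℝ) + p) * (lam - 1) + p)) *
              (∫⁻ t in Set.Ioi (0 : ℝ), volume {x | t ≤ g x} ^ (((n : ℝ) + p) / n)) ^
                ((lam - 1) * n / (((n : ℝ) + p) * (lam - 1) + p))) ∧
          (ENNReal.ofReal (A ^ (-((((n : ℝ) + p) * (lam - 1) + p) / ((lam - 1) * n)))) *
              (∫⁻ x, ENNReal.ofReal (g x)) ^ ((((n : ℝ) + p) * (lam - 1) + p) / ((lam - 1) * n)) *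
              ((∫⁻ x, ENNReal.ofReal (g x ^ lam)) ^ ((1 : ℝ) / lam)) ^
                (-(lam * p) / ((lam - 1) * n)) ≤
            ∫⁻ t in Set.Ioi (0 : ℝ), volume {x | t ≤ g x} ^ (((n : ℝ) + p) / n)) := by
  have hn₀ : (0 : ℝ) < n := by exact_mod_cast hn
  have hp₀ : 0 < p := by linarith
  have hlam₁ : 0 < lam - 1 := sub_pos.2 hlam
  have hD : 0 < ((n : ℝ) + p) * (lam - 1) + p := by positivity
  refine ⟨2 * (lam - 1) ^ (-(p / (((n : ℝ) + p) * (lam - 1) + p))), by positivity,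
    fun g hg hg₀ _ hI hK ↦ ?_⟩
  have hK₀ : ∫⁻ x, ENNReal.ofReal (g x ^ lam) ≠ 0 :=
    lintegral_ofReal_rpow_ne_zero hg.aemeasurable hI.ne'
  have hKtop : ∫⁻ x, ENNReal.ofReal (g x ^ lam) ≠ ⊤ :=
    ((ENNReal.rpow_lt_top_iff_of_pos (by positivity)).1 hK).ne
  have hmain := lintegral_ofReal_le_mul_rpow_mul_rpow hn₀ hp₀ hlam (ae_of_all _ hg₀)
    hg.aemeasurable hKtop
  refine ⟨hmain, ENNReal.ofReal_rpow_neg_mul_rpow_mul_rpow_le (by positivity)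
    (ENNReal.rpow_pos (pos_iff_ne_zero.2 hK₀) hKtop).ne' hK.ne (by positivity) ?_ ?_ hmain⟩
  · field_simp
  · field_simp; ring
end

section
/- Let $M \subset \mathbb{R}^n$ be a compact set of positive Lebesgue measure, and for $\xi \in S^{n-1}$ let $L_\xi = \{t \in [0,\infty) : t\xi \in M\}$. Define the star set $SM$ by its radial function $\rho_{SM}(\xi) = (n \cdot \mu(\delta(L_\xi)))^{1/n}$, where $\delta(t) = t^n/n$ and $\mu$ is one-dimensional Lebesgue measure. Then $\mathrm{vol}(SM) = \mathrm{vol}(M)$, and for every $x \in \mathbb{R}^n$ and $p \ge 1$, $\int_M |\langle x, y\rangle|^p dy \ge \int_{SM} |\langle x, y\rangle|^p dy$. -/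
/-!
In polar coordinates `y = r • ξ`, with `L_ξ(S) = {r ≥ 0 | r • ξ ∈ S}`, the moment
`∫_S |⟪x, y⟫|^p dy` becomes `∫_{S^{n-1}} |⟪x, ξ⟫|^p ∫_{L_ξ(S)} r^(n-1+p) dr dξ`, and the
substitution `s = δ(r) = r^n / n` turns the inner integral into `∫_{δ(L_ξ(S))} (n s)^(p/n) ds`.
For the star set `SM` the section `L_ξ(SM)` is `[0, ρ(ξ)]`, so `δ(L_ξ(SM)) = [0, μ(δ(L_ξ(M)))]`
has the same length as `δ(L_ξ(M))`. Taking `p = 0` gives equality of volumes; for `p ≥ 0` the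
density `(n s)^(p/n)` is nondecreasing, so by the bathtub principle its integral over the initial
interval is the smaller one.
-/

open MeasureTheory Real Set Metric Module
open scoped ENNReal RealInnerProductSpace

section OneDimensional

variable {n : ℕ}

theorem strictMonoOn_pow_div_natCast (hn : n ≠ 0) :
    StrictMonoOn (fun t : ℝ => t ^ n / (n : ℝ)) (Ici 0) := fun _ ha _ _ hab =>
  div_lt_div_of_pos_right (pow_lt_pow_left₀ hab ha hn) (by positivity)

theorem image_pow_div_natCast_Icc (hn : n ≠ 0) {a : ℝ} (ha : 0 ≤ a) :
    (fun t : ℝ => t ^ n / (n : ℝ)) '' Icc 0 a = Icc 0 (a ^ n / n) := by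
  rw [((continuous_pow n).div_const _).continuousOn.image_Icc_of_monotoneOn ha
    ((strictMonoOn_pow_div_natCast hn).monotoneOn.mono Icc_subset_Ici_self), zero_pow hn,
    zero_div]

theorem rpow_one_div_natCast_pow_div (hn : n ≠ 0) {c : ℝ} (hc : 0 ≤ c) :
    (((n : ℝ) * c) ^ (1 / (n : ℝ))) ^ n / n = c := by
  have hn' : (n : ℝ) ≠ 0 := Nat.cast_ne_zero.2 hn
  rw [← rpow_natCast, ← rpow_mul (by positivity), one_div_mul_cancel hn', rpow_one,
    mul_div_cancel_left₀ _ hn']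

theorem natCast_mul_pow_div_rpow (hn : n ≠ 0) {t : ℝ} (ht : 0 ≤ t) (q : ℝ) :
    ((n : ℝ) * (t ^ n / n)) ^ (q / n) = t ^ q := by
  have hn' : (n : ℝ) ≠ 0 := Nat.cast_ne_zero.2 hn
  rw [mul_div_cancel₀ _ hn', ← rpow_natCast, ← rpow_mul ht, mul_div_cancel₀ _ hn']

theorem lintegral_image_pow_div_natCast (hn : n ≠ 0) {s : Set ℝ} (hs : MeasurableSet s)
    (hs₀ : s ⊆ Ici 0) (g : ℝ → ℝ≥0∞) :
    ∫⁻ x in (fun t : ℝ => t ^ n / (n : ℝ)) '' s, g x =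
      ∫⁻ t in s, ENNReal.ofReal (t ^ (n - 1)) * g (t ^ n / n) := by
  have hderiv (t : ℝ) : HasDerivAt (fun t : ℝ => t ^ n / (n : ℝ)) (t ^ (n - 1)) t := by
    simpa [mul_div_cancel_left₀ _ (Nat.cast_ne_zero.2 hn : (n : ℝ) ≠ 0)] using
      (hasDerivAt_pow n t).div_const (n : ℝ)
  rw [lintegral_image_eq_lintegral_abs_deriv_mul hs (fun t _ => (hderiv t).hasDerivWithinAt)
    ((strictMonoOn_pow_div_natCast hn).injOn.mono hs₀)]
  refine setLIntegral_congr_fun hs fun t ht => ?_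
  rw [abs_of_nonneg (pow_nonneg (hs₀ ht) _)]

theorem setLIntegral_Icc_toReal_le_of_monotoneOn {A : Set ℝ} (hA : MeasurableSet A)
    (hA₀ : A ⊆ Ici 0) (hA_fin : volume A ≠ ∞) {g : ℝ → ℝ≥0∞} (hg : MonotoneOn g (Ici 0)) :
    ∫⁻ s in Icc 0 (volume A).toReal, g s ≤ ∫⁻ s in A, g s := by
  set c := (volume A).toReal
  have hc : 0 ≤ c := ENNReal.toReal_nonneg
  have hsdiff : volume (Icc 0 c \ A) = volume (A \ Icc 0 c) :=
    measure_sdiff_symm measurableSet_Icc.nullMeasurableSet hA.nullMeasurableSet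
      (by simp [c, ENNReal.ofReal_toReal hA_fin])
      (measure_ne_top_of_subset inter_subset_right hA_fin)
  calc ∫⁻ s in Icc 0 c, g s
      = (∫⁻ s in Icc 0 c ∩ A, g s) + ∫⁻ s in Icc 0 c \ A, g s :=
        (lintegral_inter_add_sdiff g _ hA).symm
    _ ≤ (∫⁻ s in A ∩ Icc 0 c, g s) + ∫⁻ _ in A \ Icc 0 c, g c := by
        rw [inter_comm, setLIntegral_const, ← hsdiff, ← setLIntegral_const]
        refine add_le_add le_rfl ?_
        exact setLIntegral_mono' (measurableSet_Icc.diff hA) fun s hs => hg hs.1.1 hc hs.1.2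
    _ ≤ (∫⁻ s in A ∩ Icc 0 c, g s) + ∫⁻ s in A \ Icc 0 c, g s := by
        refine add_le_add le_rfl ?_
        refine setLIntegral_mono' (hA.diff measurableSet_Icc) fun s hs => hg hc (hA₀ hs.1) ?_
        exact (not_le.1 fun hsc => hs.2 ⟨hA₀ hs.1, hsc⟩).le
    _ = ∫⁻ s in A, g s := lintegral_inter_add_sdiff g _ measurableSet_Icc

end OneDimensional

section RadialSection

variable {E : Type*} [NormedAddCommGroup E] [NormedSpace ℝ E]

def radialSection (S : Set E) (ξ : E) : Set ℝ := {t | 0 ≤ t ∧ t • ξ ∈ S}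

theorem isCompact_radialSection {S : Set E} (hS : IsCompact S) {ξ : E} (hξ : ξ ≠ 0) :
    IsCompact (radialSection S ξ) :=
  ((isClosedEmbedding_smul_left hξ).isCompact_preimage hS).inter_left isClosed_Ici

variable [MeasurableSpace E] [BorelSpace E]

theorem measurableSet_radialSection {S : Set E} (hS : MeasurableSet S) (ξ : E) :
    MeasurableSet (radialSection S ξ) :=
  measurableSet_Ici.inter (hS.preimage (measurable_id.smul_const ξ))

theorem measurable_volume_image_radialSection {n : ℕ} (hn : n ≠ 0) {S : Set E}
    (hS : MeasurableSet S) :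
    Measurable fun ξ : E => volume ((fun t : ℝ => t ^ n / (n : ℝ)) '' radialSection S ξ) := by
  have hZ : MeasurableSet {z : E × ℝ | 0 ≤ z.2 ∧ z.2 • z.1 ∈ S} :=
    (measurableSet_le measurable_const measurable_snd).inter
      (hS.preimage (measurable_snd.smul measurable_fst))
  have hvol (ξ : E) : volume ((fun t : ℝ => t ^ n / (n : ℝ)) '' radialSection S ξ) =
      volume.withDensity (fun t : ℝ => ENNReal.ofReal (t ^ (n - 1)))
        (Prod.mk ξ ⁻¹' {z : E × ℝ | 0 ≤ z.2 ∧ z.2 • z.1 ∈ S}) := by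
    rw [withDensity_apply _ (measurable_prodMk_left hZ), ← setLIntegral_one,
      lintegral_image_pow_div_natCast hn (measurableSet_radialSection hS ξ) fun _ ht => ht.1]
    simp only [mul_one]
    rfl
  simp_rw [hvol]
  exact measurable_measure_prodMk_left hZ

end RadialSection

section Polar

variable {E : Type*} [NormedAddCommGroup E] [NormedSpace ℝ E] [FiniteDimensional ℝ E]
  [MeasurableSpace E] [BorelSpace E] [Nontrivial E] (μ : Measure E) [μ.IsAddHaarMeasure]

theorem lintegral_eq_lintegral_sphere_Ioi {f : E → ℝ≥0∞} (hf : Measurable f) :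
    ∫⁻ y, f y ∂μ = ∫⁻ ξ : sphere (0 : E) 1,
      (∫⁻ r in Ioi (0 : ℝ), ENNReal.ofReal (r ^ (finrank ℝ E - 1)) * f (r • (ξ : E)))
        ∂μ.toSphere := by
  set e := homeomorphUnitSphereProd E
  have hfe : Measurable fun z => f (e.symm z) :=
    hf.comp (measurable_subtype_coe.comp e.symm.measurable)
  calc ∫⁻ y, f y ∂μ = ∫⁻ y : ({0}ᶜ : Set E), f y ∂(μ.comap (↑)) := by
        rw [lintegral_subtype_comap (measurableSet_singleton _).compl, restrict_compl_singleton]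
    _ = ∫⁻ z, f (e.symm z) ∂(μ.toSphere.prod (Measure.volumeIoiPow (finrank ℝ E - 1))) := by
        rw [← (μ.measurePreserving_homeomorphUnitSphereProd).lintegral_comp_emb
          e.measurableEmbedding]
        simp only [e, Homeomorph.symm_apply_apply]
    _ = _ := by
        rw [lintegral_prod _ hfe.aemeasurable]
        refine lintegral_congr fun ξ => ?_
        rw [Measure.volumeIoiPow, lintegral_withDensity_eq_lintegral_mul_non_measurable₀ _
          (measurable_subtype_coe.pow_const _).ennreal_ofReal.aemeasurable
          (.of_forall fun _ => ENNReal.ofReal_lt_top), ← lintegral_subtype_comap measurableSet_Ioi]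
        rfl

theorem setLIntegral_eq_lintegral_sphere_radialSection {S : Set E} (hS : MeasurableSet S)
    {f : E → ℝ≥0∞} (hf : Measurable f) :
    ∫⁻ y in S, f y ∂μ = ∫⁻ ξ : sphere (0 : E) 1,
      (∫⁻ r in radialSection S ξ, ENNReal.ofReal (r ^ (finrank ℝ E - 1)) * f (r • (ξ : E)))
        ∂μ.toSphere := by
  rw [← lintegral_indicator hS, lintegral_eq_lintegral_sphere_Ioi μ (hf.indicator hS)]
  refine lintegral_congr fun ξ => ?_
  have hpre : MeasurableSet ((fun r : ℝ => r • (ξ : E)) ⁻¹' S) :=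
    hS.preimage (measurable_id.smul_const _)
  have hind (r : ℝ) : ENNReal.ofReal (r ^ (finrank ℝ E - 1)) * S.indicator f (r • (ξ : E)) =
      ((fun r : ℝ => r • (ξ : E)) ⁻¹' S).indicator
        (fun r => ENNReal.ofReal (r ^ (finrank ℝ E - 1)) * f (r • (ξ : E))) r := by
    rw [indicator_mul_right, ← indicator_comp_right]
    rfl
  simp_rw [hind]
  rw [setLIntegral_congr Ioi_ae_eq_Ici, lintegral_indicator hpre, Measure.restrict_restrict hpre,
    inter_comm]
  rfl

end Polar

section Moments

variable {E : Type*} [NormedAddCommGroup E] [InnerProductSpace ℝ E] [FiniteDimensional ℝ E]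
  [MeasurableSpace E] [BorelSpace E] [Nontrivial E] (μ : Measure E) [μ.IsAddHaarMeasure]

theorem setLIntegral_abs_inner_rpow_eq (x : E) (p : ℝ) {S : Set E} (hS : MeasurableSet S) :
    ∫⁻ y in S, ENNReal.ofReal (|⟪x, y⟫| ^ p) ∂μ =
      ∫⁻ ξ : sphere (0 : E) 1, ENNReal.ofReal (|⟪x, (ξ : E)⟫| ^ p) *
        (∫⁻ s in (fun t : ℝ => t ^ finrank ℝ E / (finrank ℝ E : ℝ)) '' radialSection S ξ,
          ENNReal.ofReal (((finrank ℝ E : ℝ) * s) ^ (p / finrank ℝ E))) ∂μ.toSphere := by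
  have hd : finrank ℝ E ≠ 0 := finrank_pos.ne'
  rw [setLIntegral_eq_lintegral_sphere_radialSection μ hS (by fun_prop)]
  refine lintegral_congr fun ξ => ?_
  have hξS := measurableSet_radialSection hS (ξ : E)
  rw [lintegral_image_pow_div_natCast hd hξS (fun _ ht => ht.1),
    ← lintegral_const_mul' _ _ ENNReal.ofReal_ne_top]
  refine setLIntegral_congr_fun hξS fun t ht => ?_
  rw [natCast_mul_pow_div_rpow hd ht.1, inner_smul_right, abs_mul, abs_of_nonneg ht.1,
    mul_rpow ht.1 (abs_nonneg _), ENNReal.ofReal_mul (rpow_nonneg ht.1 _)]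
  ring

theorem measure_eq_lintegral_sphere_volume_image_radialSection {S : Set E} (hS : MeasurableSet S) :
    μ S = ∫⁻ ξ : sphere (0 : E) 1,
      volume ((fun t : ℝ => t ^ finrank ℝ E / (finrank ℝ E : ℝ)) '' radialSection S ξ)
        ∂μ.toSphere := by
  simpa using setLIntegral_abs_inner_rpow_eq μ 0 0 hS

end Moments

section StarSet

variable {E : Type*} [NormedAddCommGroup E] [NormedSpace ℝ E]

def starSet (ρ : E → ℝ) : Set E := {y | y = 0 ∨ ‖y‖ ≤ ρ (‖y‖⁻¹ • y)}

theorem radialSection_starSet {ρ : E → ℝ} {ξ : E} (hξ : ‖ξ‖ = 1) (hρ : 0 ≤ ρ ξ) :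
    radialSection (starSet ρ) ξ = Icc 0 (ρ ξ) := by
  ext t
  rcases lt_trichotomy t 0 with ht | rfl | ht
  · simp [radialSection, ht.not_ge]
  · simp [radialSection, starSet, hρ]
  · have hnorm : ‖t • ξ‖ = t := by rw [norm_smul, hξ, mul_one, norm_of_nonneg ht.le]
    have hξ₀ : ξ ≠ 0 := norm_ne_zero_iff.1 (hξ ▸ one_ne_zero)
    simp [radialSection, starSet, ht.le, ht.ne', hξ₀, hnorm, inv_smul_smul₀ ht.ne']

theorem starSet_congr {ρ ρ' : E → ℝ} (h : ∀ ξ : E, ‖ξ‖ = 1 → ρ ξ = ρ' ξ) :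
    starSet ρ = starSet ρ' := by
  ext y
  rcases eq_or_ne y 0 with rfl | hy
  · simp [starSet]
  · have hunit : ‖‖y‖⁻¹ • y‖ = 1 := by
      rw [norm_smul, norm_inv, norm_norm, inv_mul_cancel₀ (norm_ne_zero_iff.2 hy)]
    change _ ∨ _ ↔ _ ∨ _
    rw [h _ hunit]

variable [MeasurableSpace E] [BorelSpace E]

theorem measurableSet_starSet {ρ : E → ℝ} (hρ : Measurable fun ξ : sphere (0 : E) 1 => ρ ξ) :
    MeasurableSet (starSet ρ) := by
  have hρ' : Measurable fun y : E => ρ (‖y‖⁻¹ • y) := by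
    refine measurable_of_restrict_of_restrict_compl (measurableSet_singleton 0)
      Subsingleton.measurable ?_
    convert hρ.comp (measurable_fst.comp (homeomorphUnitSphereProd E).measurable) using 1
    ext y
    simp
  exact (measurableSet_singleton 0).union (measurableSet_le measurable_norm hρ')

end StarSet

section Symmetral

variable {E : Type*} [NormedAddCommGroup E] [NormedSpace ℝ E] {n : ℕ}

noncomputable def symmetralRadius (n : ℕ) (M : Set E) (ξ : E) : ℝ :=
  ((n : ℝ) * (volume ((fun t : ℝ => t ^ n / (n : ℝ)) '' radialSection M ξ)).toReal) ^
    (1 / (n : ℝ))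

theorem image_radialSection_starSet_symmetralRadius (hn : n ≠ 0) (M : Set E) {ξ : E}
    (hξ : ‖ξ‖ = 1) :
    (fun t : ℝ => t ^ n / (n : ℝ)) '' radialSection (starSet (symmetralRadius n M)) ξ =
      Icc 0 (volume ((fun t : ℝ => t ^ n / (n : ℝ)) '' radialSection M ξ)).toReal := by
  have hρ₀ : 0 ≤ symmetralRadius n M ξ := by unfold symmetralRadius; positivity
  rw [radialSection_starSet hξ hρ₀, image_pow_div_natCast_Icc hn hρ₀, symmetralRadius,
    rpow_one_div_natCast_pow_div hn ENNReal.toReal_nonneg]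

theorem isCompact_image_radialSection {M : Set E} (hM : IsCompact M) {ξ : E} (hξ : ξ ≠ 0) :
    IsCompact ((fun t : ℝ => t ^ n / (n : ℝ)) '' radialSection M ξ) :=
  (isCompact_radialSection hM hξ).image (by fun_prop)

theorem measurableSet_starSet_symmetralRadius [MeasurableSpace E] [BorelSpace E] (hn : n ≠ 0)
    {M : Set E} (hM : MeasurableSet M) : MeasurableSet (starSet (symmetralRadius n M)) :=
  measurableSet_starSet <| (((measurable_volume_image_radialSection hn hM).ennreal_toReal.const_mul
    _).pow_const _).comp measurable_subtype_coe

end Symmetral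

section BusemannPetty

variable {E : Type*} [NormedAddCommGroup E] [InnerProductSpace ℝ E] [FiniteDimensional ℝ E]
  [MeasurableSpace E] [BorelSpace E] [Nontrivial E] (μ : Measure E) [μ.IsAddHaarMeasure]
  {M : Set E}

theorem measure_starSet_symmetralRadius (hM : IsCompact M) :
    μ (starSet (symmetralRadius (finrank ℝ E) M)) = μ M := by
  have hd : finrank ℝ E ≠ 0 := finrank_pos.ne'
  rw [measure_eq_lintegral_sphere_volume_image_radialSection μ
      (measurableSet_starSet_symmetralRadius hd hM.measurableSet),
    measure_eq_lintegral_sphere_volume_image_radialSection μ hM.measurableSet]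
  refine lintegral_congr fun ξ => ?_
  rw [image_radialSection_starSet_symmetralRadius hd M (norm_eq_of_mem_sphere ξ), Real.volume_Icc,
    sub_zero, ENNReal.ofReal_toReal (isCompact_image_radialSection hM
      (ne_zero_of_mem_unit_sphere ξ)).measure_lt_top.ne]

theorem setLIntegral_starSet_symmetralRadius_le (hM : IsCompact M) (x : E) {p : ℝ} (hp : 0 ≤ p) :
    ∫⁻ y in starSet (symmetralRadius (finrank ℝ E) M), ENNReal.ofReal (|⟪x, y⟫| ^ p) ∂μ ≤
      ∫⁻ y in M, ENNReal.ofReal (|⟪x, y⟫| ^ p) ∂μ := by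
  have hd : finrank ℝ E ≠ 0 := finrank_pos.ne'
  rw [setLIntegral_abs_inner_rpow_eq μ x p
      (measurableSet_starSet_symmetralRadius hd hM.measurableSet),
    setLIntegral_abs_inner_rpow_eq μ x p hM.measurableSet]
  refine lintegral_mono fun ξ => mul_le_mul_right ?_ _
  have hA := isCompact_image_radialSection (n := finrank ℝ E) hM (ne_zero_of_mem_unit_sphere ξ)
  rw [image_radialSection_starSet_symmetralRadius hd M (norm_eq_of_mem_sphere ξ)]
  refine setLIntegral_Icc_toReal_le_of_monotoneOn hA.measurableSet ?_ hA.measure_lt_top.ne ?_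
  · rintro _ ⟨t, ht, rfl⟩
    exact div_nonneg (pow_nonneg ht.1 _) (Nat.cast_nonneg _)
  · exact fun a ha b _ hab => ENNReal.ofReal_le_ofReal <| rpow_le_rpow
      (mul_nonneg (Nat.cast_nonneg _) ha) (by gcongr) (div_nonneg hp (Nat.cast_nonneg _))

end BusemannPetty

theorem stmt8_general {n : ℕ} (hn : 1 ≤ n) (p : ℝ) (hp : 1 ≤ p)
    (M : Set (EuclideanSpace ℝ (Fin n))) (hMc : IsCompact M)
    (ρ : EuclideanSpace ℝ (Fin n) → ℝ)
    (hρ : ∀ ξ : EuclideanSpace ℝ (Fin n), ‖ξ‖ = 1 →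
      ρ ξ = ((n : ℝ) *
        (volume ((fun t : ℝ => t ^ n / (n : ℝ)) '' {t : ℝ | 0 ≤ t ∧ t • ξ ∈ M})).toReal) ^
          ((1 : ℝ) / (n : ℝ)))
    (SM : Set (EuclideanSpace ℝ (Fin n)))
    (hSM : SM = {y : EuclideanSpace ℝ (Fin n) | y = 0 ∨ ‖y‖ ≤ ρ (‖y‖⁻¹ • y)}) :
    volume SM = volume M ∧
    ∀ x : EuclideanSpace ℝ (Fin n),
      (∫⁻ y in SM, ENNReal.ofReal (|⟪x, y⟫| ^ p)) ≤
        ∫⁻ y in M, ENNReal.ofReal (|⟪x, y⟫| ^ p) := by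
  have hdim : finrank ℝ (EuclideanSpace ℝ (Fin n)) = n := finrank_euclideanSpace_fin
  have : Nontrivial (EuclideanSpace ℝ (Fin n)) := nontrivial_of_finrank_pos (R := ℝ) (by omega)
  obtain rfl : SM = starSet (symmetralRadius (finrank ℝ (EuclideanSpace ℝ (Fin n))) M) := by
    rw [hSM, hdim]
    exact starSet_congr hρ
  exact ⟨measure_starSet_symmetralRadius volume hMc,
    fun x => setLIntegral_starSet_symmetralRadius_le volume hMc x (by linarith)⟩

theorem stmt8 {n : ℕ} (hn : 1 ≤ n) (p : ℝ) (hp : 1 ≤ p)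
    (M : Set (EuclideanSpace ℝ (Fin n))) (hMc : IsCompact M) (hMvol : 0 < volume M)
    (ρ : EuclideanSpace ℝ (Fin n) → ℝ)
    (hρ : ∀ ξ : EuclideanSpace ℝ (Fin n), ‖ξ‖ = 1 →
      ρ ξ = ((n : ℝ) *
        (volume ((fun t : ℝ => t ^ n / (n : ℝ)) '' {t : ℝ | 0 ≤ t ∧ t • ξ ∈ M})).toReal) ^
          ((1 : ℝ) / (n : ℝ)))
    (SM : Set (EuclideanSpace ℝ (Fin n)))
    (hSM : SM = {y : EuclideanSpace ℝ (Fin n) | y = 0 ∨ ‖y‖ ≤ ρ (‖y‖⁻¹ • y)}) :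
    volume SM = volume M ∧
    ∀ x : EuclideanSpace ℝ (Fin n),
      (∫⁻ y in SM, ENNReal.ofReal (|⟪x, y⟫| ^ p)) ≤
        ∫⁻ y in M, ENNReal.ofReal (|⟪x, y⟫| ^ p) :=
  stmt8_general hn p hp M hMc ρ hρ SM hSM
end

section
/- Let $f : \mathbb{R}^n \to \mathbb{R}$ be a $C^1$ function with compact support and let $N_{f,t} = \{x : |f(x)| \ge t\}$. Then for every $\eta \in (0, 1]$, $\int_0^\infty \mathrm{vol}(N_{f,t})^{\eta}\, dt \ge \left(\int_{\mathbb{R}^n} |f(x)|^{1/\eta} dx\right)^{\eta} = \|f\|_{1/\eta}$. -/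
/-!
For `p = 1 / η > 1` write `|f|^p = |f| · |f|^(p-1)`. The layer-cake formula for the measure with
density `|f|^(p-1)` gives `∫ |f|^p = ∫₀^∞ ∫_{N_t} |f|^(p-1) dt`, and Hölder's inequality on each
`N_t` bounds the inner integral by `vol(N_t)^(1/p) (∫ |f|^p)^(1/q)`. Dividing by the finite factor
`(∫ |f|^p)^(1/q)` leaves `(∫ |f|^p)^(1/p) ≤ ∫₀^∞ vol(N_t)^(1/p) dt`. For `η = 1` the claim is the
layer-cake formula itself.
-/

open MeasureTheory Real Set
open scoped ENNReal

theorem ENNReal.rpow_one_div_le_of_le_mul_rpow {a b : ℝ≥0∞} {p q : ℝ} (hpq : p.HolderConjugate q)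
    (ha : a ≠ ⊤) (h : a ≤ b * a ^ (1 / q)) : a ^ (1 / p) ≤ b := by
  rcases eq_or_ne a 0 with rfl | ha₀
  · rw [ENNReal.zero_rpow_of_pos hpq.one_div_pos]
    exact zero_le
  have hsplit : a ^ (1 / p) * a ^ (1 / q) = a := by
    rw [← ENNReal.rpow_add _ _ ha₀ ha, hpq.one_div_add_one_div, div_one, ENNReal.rpow_one]
  refine (ENNReal.mul_le_mul_iff_left ?_ ?_).1 (hsplit.trans_le h)
  · simp [ENNReal.rpow_eq_zero_iff, ha₀, ha]
  · simp [ENNReal.rpow_eq_top_iff, ha₀, ha]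

section

variable {α : Type*} [MeasurableSpace α] (μ : Measure α)

theorem lintegral_ofReal_mul_eq_lintegral_setLIntegral_le {f : α → ℝ} (hf_nn : ∀ x, 0 ≤ f x)
    (hf : Measurable f) {g : α → ℝ≥0∞} (hg : Measurable g) :
    ∫⁻ x, ENNReal.ofReal (f x) * g x ∂μ = ∫⁻ t in Ioi 0, ∫⁻ x in {x | t ≤ f x}, g x ∂μ :=
  calc ∫⁻ x, ENNReal.ofReal (f x) * g x ∂μ = ∫⁻ x, ENNReal.ofReal (f x) ∂μ.withDensity g := by
        rw [lintegral_withDensity_eq_lintegral_mul _ hg hf.ennreal_ofReal]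
        simp only [Pi.mul_apply, mul_comm]
    _ = ∫⁻ t in Ioi 0, μ.withDensity g {x | t ≤ f x} :=
        lintegral_eq_lintegral_meas_le _ (.of_forall hf_nn) hf.aemeasurable
    _ = ∫⁻ t in Ioi 0, ∫⁻ x in {x | t ≤ f x}, g x ∂μ :=
        setLIntegral_congr_fun measurableSet_Ioi fun t _ ↦
          withDensity_apply g (measurableSet_le measurable_const hf)

theorem setLIntegral_le_measure_rpow_mul {p q : ℝ} (hpq : p.HolderConjugate q) (s : Set α)
    {g : α → ℝ≥0∞} (hg : AEMeasurable g (μ.restrict s)) :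
    ∫⁻ x in s, g x ∂μ ≤ μ s ^ (1 / p) * (∫⁻ x in s, g x ^ q ∂μ) ^ (1 / q) := by
  simpa using ENNReal.lintegral_mul_le_Lp_mul_Lq (μ.restrict s) hpq aemeasurable_const hg
    (f := 1)

theorem lintegral_rpow_rpow_one_div_le_lintegral_meas_le_rpow_one_div {f : α → ℝ}
    (hf_nn : ∀ x, 0 ≤ f x) (hf : Measurable f) {p : ℝ} (hp : 1 < p)
    (hfin : ∫⁻ x, ENNReal.ofReal (f x ^ p) ∂μ ≠ ⊤) :
    (∫⁻ x, ENNReal.ofReal (f x ^ p) ∂μ) ^ (1 / p) ≤ ∫⁻ t in Ioi 0, μ {x | t ≤ f x} ^ (1 / p) := by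
  set q := conjExponent p
  have hpq : p.HolderConjugate q := .conjExponent hp
  set I := ∫⁻ x, ENNReal.ofReal (f x ^ p) ∂μ
  set g : α → ℝ≥0∞ := fun x ↦ ENNReal.ofReal (f x ^ (p - 1))
  have hfg (x : α) : ENNReal.ofReal (f x ^ p) = ENNReal.ofReal (f x) * g x := by
    rw [← ENNReal.ofReal_mul (hf_nn x), ← Real.rpow_one_add' (hf_nn x) (by linarith)]
    ring_nf
  have hgq (x : α) : g x ^ q = ENNReal.ofReal (f x ^ p) := by
    rw [ENNReal.ofReal_rpow_of_nonneg (Real.rpow_nonneg (hf_nn x) _) hpq.symm.nonneg,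
      ← Real.rpow_mul (hf_nn x), hpq.sub_one_mul_conj]
  refine ENNReal.rpow_one_div_le_of_le_mul_rpow hpq hfin ?_
  calc I = ∫⁻ x, ENNReal.ofReal (f x) * g x ∂μ := lintegral_congr hfg
    _ = ∫⁻ t in Ioi 0, ∫⁻ x in {x | t ≤ f x}, g x ∂μ :=
        lintegral_ofReal_mul_eq_lintegral_setLIntegral_le μ hf_nn hf
          (hf.pow_const _).ennreal_ofReal
    _ ≤ ∫⁻ t in Ioi 0, μ {x | t ≤ f x} ^ (1 / p) * I ^ (1 / q) := by
        refine lintegral_mono fun t ↦ ?_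
        refine (setLIntegral_le_measure_rpow_mul μ hpq _
          (hf.pow_const _).ennreal_ofReal.aemeasurable).trans ?_
        gcongr
        · exact hpq.symm.one_div_nonneg
        · exact (setLIntegral_le_lintegral _ _).trans_eq (lintegral_congr hgq)
    _ = (∫⁻ t in Ioi 0, μ {x | t ≤ f x} ^ (1 / p)) * I ^ (1 / q) :=
        lintegral_mul_const' _ _ (ENNReal.rpow_ne_top_of_nonneg hpq.symm.one_div_nonneg hfin)

theorem lintegral_rpow_one_div_rpow_le_lintegral_meas_le_rpow {f : α → ℝ}
    (hf_nn : ∀ x, 0 ≤ f x) (hf : Measurable f) {η : ℝ} (hη₀ : 0 < η) (hη₁ : η ≤ 1)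
    (hfin : ∫⁻ x, ENNReal.ofReal (f x ^ (1 / η)) ∂μ ≠ ⊤) :
    (∫⁻ x, ENNReal.ofReal (f x ^ (1 / η)) ∂μ) ^ η ≤ ∫⁻ t in Ioi 0, μ {x | t ≤ f x} ^ η := by
  rcases hη₁.eq_or_lt with rfl | hη₁
  · simpa using (lintegral_eq_lintegral_meas_le μ (.of_forall hf_nn) hf.aemeasurable).le
  · simpa using lintegral_rpow_rpow_one_div_le_lintegral_meas_le_rpow_one_div μ hf_nn hf
      (one_lt_one_div hη₀ hη₁) hfin

end

theorem stmt17 {n : ℕ} (f : EuclideanSpace ℝ (Fin n) → ℝ) (hf : ContDiff ℝ 1 f)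
    (hsupp : HasCompactSupport f) (η : ℝ) (hη1 : 0 < η) (hη2 : η ≤ 1) :
    (∫⁻ x, ENNReal.ofReal (|f x| ^ (1 / η))) ^ η ≤
      ∫⁻ t in Set.Ioi (0 : ℝ), volume {x | t ≤ |f x|} ^ η := by
  have hfc : Continuous f := hf.continuous
  have hfin : ∫⁻ x, ENNReal.ofReal (|f x| ^ (1 / η)) ≠ ⊤ :=
    ((hfc.abs.rpow_const fun _ ↦ .inr (by positivity)).integrable_of_hasCompactSupport
      (hsupp.abs.rpow_const (by positivity))).lintegral_lt_top.ne
  exact lintegral_rpow_one_div_rpow_le_lintegral_meas_le_rpow volume (fun _ ↦ abs_nonneg _)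
    hfc.measurable.abs hη1 hη2 hfin
end
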